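/- arXiv:2105.14306 — 7 statements merged into one kernel-verified Lean document; each statement's English description precedes it below -/
import Mathlib

section
/- If {C_0, C_1, ..., C_d} is a d-critical family in R^d, then the complement R^d \ (C_0 ∪ ... ∪ C_d) has a bounded connected component. -/
/-!
Choose `p j` in every `C i` with `i ≠ j`. A Radon point of affinely dependent `p j` would lie in
all the `C i`, so the `p j` are the vertices of a `d`-simplex `σ` whose facet opposite `p j` lies
in the convex set `C j`; thus the frontier of `σ` is covered by the family. By Berge's theorem the
sets `C i ∩ σ` cannot cover `σ`, since their union would be convex while they have no common point.
A point of `σ` outside every `C i` then has its component in the complement trapped inside `σ`.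
-/

open Set

theorem connectedComponentIn_subset_of_disjoint_frontier {X : Type*} [TopologicalSpace X]
    {S U : Set X} {x : X} (hxS : x ∈ S) (hxU : x ∈ U) (hSU : Disjoint (frontier S) U) :
    connectedComponentIn U x ⊆ S := by
  have hnotfront : ∀ z ∈ connectedComponentIn U x, z ∉ frontier S := fun z hz hzS =>
    hSU.notMem_of_mem_left hzS (connectedComponentIn_subset U x hz)
  have hxint : x ∈ interior S := by
    have := subset_closure hxS
    rw [closure_eq_interior_union_frontier] at this
    exact this.resolve_right (hnotfront x (mem_connectedComponentIn hxU))
  refine (isPreconnected_connectedComponentIn.subset_of_closure_inter_subset isOpen_interior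
    ⟨x, mem_connectedComponentIn hxU, hxint⟩ fun z ⟨hzS, hz⟩ => ?_).trans interior_subset
  have := closure_mono interior_subset hzS
  rw [closure_eq_interior_union_frontier] at this
  exact this.resolve_right (hnotfront z hz)

section Berge

variable {E : Type*} [AddCommGroup E] [Module ℝ E] [TopologicalSpace E]
  [IsTopologicalAddGroup E] [ContinuousSMul ℝ E]

theorem IsClosed.inter_nonempty_of_convex_union {A B : Set E} (hA : IsClosed A) (hB : IsClosed B)
    (hAB : Convex ℝ (A ∪ B)) (hAne : A.Nonempty) (hBne : B.Nonempty) : (A ∩ B).Nonempty := by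
  obtain ⟨z, -, hz⟩ := isPreconnected_closed_iff.mp hAB.isPreconnected A B hA hB subset_rfl
    (hAne.mono fun a ha => ⟨.inl ha, ha⟩) (hBne.mono fun b hb => ⟨.inr hb, hb⟩)
  exact ⟨z, hz⟩

variable [LocallyConvexSpace ℝ E] [T2Space E]

/-- **Berge's theorem** -/
theorem iInter_nonempty_of_convex_iUnion (n : ℕ) (A : Fin (n + 2) → Set E)
    (hcomp : ∀ i, IsCompact (A i)) (hconv : ∀ i, Convex ℝ (A i)) (hU : Convex ℝ (⋃ i, A i))
    (hcrit : ∀ j, (⋂ i ∈ {i : Fin (n + 2) | i ≠ j}, A i).Nonempty) :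
    (⋂ i, A i).Nonempty := by
  induction n with
  | zero =>
    have hunion : ⋃ i, A i = A 0 ∪ A 1 := by ext; simp [Fin.exists_fin_two]
    have hinter : ⋂ i, A i = A 0 ∩ A 1 := by ext; simp [Fin.forall_fin_two]
    rw [hinter]
    exact (hcomp 0).isClosed.inter_nonempty_of_convex_union (hcomp 1).isClosed (hunion ▸ hU)
      ((hcrit 1).mono (biInter_subset_of_mem (by decide)))
      ((hcrit 0).mono (biInter_subset_of_mem (by decide)))
  | succ n ih =>
    -- Strictly separate `K` from `A L` by a hyperplane `H`; the traces of the other `A i` on `H`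
    -- again satisfy the hypotheses, with one set fewer.
    by_contra hempty
    set L := Fin.last (n + 2)
    set K := ⋂ i : Fin (n + 2), A i.castSucc
    obtain ⟨y, hy⟩ := hcrit L
    have hyK : y ∈ K := mem_iInter.mpr fun i => mem_iInter₂.mp hy _ (Fin.castSucc_lt_last i).ne
    have hKL : Disjoint K (A L) := disjoint_left.mpr fun z hzK hzL =>
      hempty ⟨z, mem_iInter.mpr fun i => Fin.lastCases hzL (mem_iInter.mp hzK) i⟩
    have hKcomp : IsCompact K := (hcomp (Fin.castSucc 0)).of_isClosed_subset
      (isClosed_iInter fun i => (hcomp _).isClosed) (iInter_subset _ 0)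
    obtain ⟨f, u, v, hfK, huv, hfL⟩ := geometric_hahn_banach_compact_closed
      (convex_iInter fun i => hconv _) hKcomp (hconv L) (hcomp L).isClosed hKL
    set H := {x | f x = u}
    have hLH : Disjoint (A L) H := disjoint_left.mpr fun x hx hxH =>
      (huv.trans (hfL x hx)).ne' hxH
    have hunion : ⋃ i : Fin (n + 2), A i.castSucc ∩ H = (⋃ i, A i) ∩ H := by
      rw [← iUnion_inter]
      refine subset_antisymm
        (inter_subset_inter_left _ (iUnion_subset fun i => subset_iUnion _ _)) ?_
      rintro x ⟨hx, hxH⟩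
      obtain ⟨i, hi⟩ := mem_iUnion.mp hx
      induction i using Fin.lastCases with
      | last => exact absurd hxH (hLH.notMem_of_mem_left hi)
      | cast i => exact ⟨mem_iUnion.mpr ⟨i, hi⟩, hxH⟩
    have hHcrit : ∀ j, (⋂ i ∈ {i : Fin (n + 2) | i ≠ j}, A i.castSucc ∩ H).Nonempty := by
      intro j
      obtain ⟨a, ha⟩ := hcrit j.castSucc
      have hfa : u < f a := huv.trans (hfL a (mem_iInter₂.mp ha L (Fin.castSucc_lt_last j).ne'))
      obtain ⟨z, hz, hfz⟩ := (convex_segment y a).isPreconnected.intermediate_value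
        (left_mem_segment ℝ y a) (right_mem_segment ℝ y a) f.continuous.continuousOn
        ⟨(hfK y hyK).le, hfa.le⟩
      refine ⟨z, mem_iInter₂.mpr fun i hij => ⟨?_, hfz⟩⟩
      exact (hconv _).segment_subset (mem_iInter.mp hyK i)
        (mem_iInter₂.mp ha _ ((Fin.castSucc_injective _).ne hij)) hz
    obtain ⟨z, hz⟩ := ih (fun i => A i.castSucc ∩ H)
      (fun i => (hcomp _).inter_right (isClosed_eq f.continuous continuous_const))
      (fun i => (hconv _).inter (convex_hyperplane f.toLinearMap.isLinear u))
      (hunion ▸ hU.inter (convex_hyperplane f.toLinearMap.isLinear u)) hHcrit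
    exact (hfK z (mem_iInter.mpr fun i => (mem_iInter.mp hz i).1)).ne (mem_iInter.mp hz 0).2

end Berge

section Simplex

variable {ι 𝕜 E : Type*} [Field 𝕜] [LinearOrder 𝕜] [IsStrictOrderedRing 𝕜]
  [AddCommGroup E] [Module 𝕜 E]

theorem affineIndependent_of_iInter_eq_empty {C : ι → Set E} (hconv : ∀ i, Convex 𝕜 (C i))
    (hempty : ⋂ i, C i = ∅) {p : ι → E} (hpC : ∀ i j, i ≠ j → p j ∈ C i) :
    AffineIndependent 𝕜 p := by
  by_contra hdep
  obtain ⟨I, q, hqI, hqIc⟩ := Convex.radon_partition hdep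
  have hq : q ∈ ⋂ i, C i := mem_iInter.mpr fun i => by
    by_cases hi : i ∈ I
    · refine convexHull_min ?_ (hconv i) hqIc
      rintro _ ⟨j, hj, rfl⟩
      exact hpC i j fun h => hj (h ▸ hi)
    · refine convexHull_min ?_ (hconv i) hqI
      rintro _ ⟨j, hj, rfl⟩
      exact hpC i j fun h => hi (h ▸ hj)
  simp [hempty] at hq

theorem AffineBasis.mem_of_coord_eq_zero [Fintype ι] (b : AffineBasis ι 𝕜 E) {C : Set E}
    (hC : Convex 𝕜 C) {j : ι} (hbC : ∀ i, i ≠ j → b i ∈ C) {y : E}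
    (hy : ∀ i, 0 ≤ b.coord i y) (hyj : b.coord j y = 0) : y ∈ C := by
  classical
  have hsum : ∑ i ∈ Finset.univ.erase j, b.coord i y = 1 := by
    rw [Finset.sum_erase (f := fun i => b.coord i y) _ hyj, b.sum_coord_apply_eq_one]
  have hcomb : ∑ i ∈ Finset.univ.erase j, b.coord i y • b i = y := by
    rw [Finset.sum_erase (f := fun i => b.coord i y • b i) _ (by rw [hyj, zero_smul]),
      b.linear_combination_coord_eq_self]
  exact hcomb ▸ hC.sum_mem (fun i _ => hy i) hsum fun i hi => hbC i (Finset.ne_of_mem_erase hi)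

end Simplex

theorem AffineBasis.frontier_convexHull_subset_iUnion {ι E : Type*} [Finite ι]
    [NormedAddCommGroup E] [NormedSpace ℝ E] (b : AffineBasis ι ℝ E) {C : ι → Set E}
    (hconv : ∀ i, Convex ℝ (C i)) (hbC : ∀ i j, i ≠ j → b j ∈ C i) :
    frontier (convexHull ℝ (range b)) ⊆ ⋃ i, C i := by
  have := Fintype.ofFinite ι
  intro y ⟨hycl, hyint⟩
  rw [((finite_range b).isCompact_convexHull (𝕜 := ℝ)).isClosed.closure_eq,
    b.convexHull_eq_nonneg_coord] at hycl
  rw [b.interior_convexHull] at hyint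
  obtain ⟨i, hi⟩ := not_forall.mp hyint
  exact mem_iUnion.mpr ⟨i, b.mem_of_coord_eq_zero (hconv i) (fun j hj => hbC i j hj.symm) hycl
    (le_antisymm (not_lt.mp hi) (hycl i))⟩

/-- The complement of the union of a d-critical family in ℝ^d has a bounded
connected component. -/
theorem critical_family_has_bounded_component (d : ℕ)
    (C : Fin (d + 1) → Set (EuclideanSpace ℝ (Fin d)))
    (hcomp : ∀ i, IsCompact (C i)) (hconv : ∀ i, Convex ℝ (C i))
    (hcrit : ∀ j, (⋂ i ∈ {i : Fin (d + 1) | i ≠ j}, C i).Nonempty)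
    (hempty : (⋂ i, C i) = ∅) :
    ∃ x ∈ (⋃ i, C i)ᶜ,
      Bornology.IsBounded (connectedComponentIn (⋃ i, C i)ᶜ x) := by
  obtain _ | n := d
  · have hU : ⋃ i, C i = ∅ := by
      rw [← hempty]; ext; simp [Fin.forall_fin_one, Fin.exists_fin_one]
    exact ⟨0, by simp [hU], (toFinite _).isBounded⟩
  choose p hp using hcrit
  have hpC : ∀ i j, i ≠ j → p j ∈ C i := fun i j hij => mem_iInter₂.mp (hp j) i hij
  have hindep : AffineIndependent ℝ p := affineIndependent_of_iInter_eq_empty hconv hempty hpC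
  let b : AffineBasis (Fin (n + 2)) ℝ (EuclideanSpace ℝ (Fin (n + 1))) :=
    ⟨p, hindep, hindep.affineSpan_eq_top_iff_card_eq_finrank_add_one.mpr (by simp)⟩
  set σ := convexHull ℝ (range b)
  have hσ : IsCompact σ := (finite_range b).isCompact_convexHull (𝕜 := ℝ)
  obtain ⟨x, hxσ, hxU⟩ : ∃ x ∈ σ, x ∉ ⋃ i, C i := by
    by_contra! hcov
    obtain ⟨z, hz⟩ := iInter_nonempty_of_convex_iUnion n (fun i => C i ∩ σ)
      (fun i => (hcomp i).inter_right hσ.isClosed)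
      (fun i => (hconv i).inter (convex_convexHull ℝ _))
      (by rw [← iUnion_inter, inter_eq_right.mpr hcov]; exact convex_convexHull ℝ _)
      fun j => ⟨p j, mem_iInter₂.mpr fun i hij =>
        ⟨hpC i j hij, subset_convexHull ℝ _ (mem_range_self j)⟩⟩
    simpa [hempty] using (iInter_mono fun i => inter_subset_left) hz
  exact ⟨x, hxU, hσ.isBounded.subset <| connectedComponentIn_subset_of_disjoint_frontier hxσ hxU <|
    disjoint_compl_right.mono_left (b.frontier_convexHull_subset_iUnion hconv hpC)⟩
end

section
/- Let {C_0, ..., C_d} be a d-critical family in R^d and for each j pick a point a_j in the intersection of all C_i with i ≠ j. Then the points a_0, ..., a_d are affinely independent. -/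
/-- Points chosen from the d-element partial intersections of a d-critical
family are affinely independent. -/
theorem critical_family_points_affineIndependent (d : ℕ)
    (C : Fin (d + 1) → Set (EuclideanSpace ℝ (Fin d)))
    (hcomp : ∀ i, IsCompact (C i)) (hconv : ∀ i, Convex ℝ (C i))
    (hempty : (⋂ i, C i) = ∅)
    (a : Fin (d + 1) → EuclideanSpace ℝ (Fin d))
    (ha : ∀ j, a j ∈ ⋂ i ∈ {i : Fin (d + 1) | i ≠ j}, C i) :
    AffineIndependent ℝ a := by
  by_contra h
  obtain ⟨I, x, hxI, hxIc⟩ := Convex.radon_partition (𝕜 := ℝ) h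
  have hx : x ∈ ⋂ i, C i := by
    refine Set.mem_iInter.2 fun i => ?_
    have key : ∀ (S : Set (Fin (d+1))), i ∉ S → x ∈ convexHull ℝ (a '' S) → x ∈ C i := by
      intro S hiS hxS
      refine (hconv i).convexHull_subset_iff.2 ?_ hxS
      rintro _ ⟨j, hj, rfl⟩
      have hji : j ≠ i := fun e => hiS (e ▸ hj)
      have := ha j
      simp only [Set.mem_iInter] at this
      exact this i hji.symm
    by_cases hi : i ∈ I
    · exact key Iᶜ (by simp [hi]) hxIc
    · exact key I hi hxI
  rw [hempty] at hx
  exact hx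
end

section
/- Let {C_0, ..., C_d} be a d-critical family in R^d. Then for each j, there is a unique point p_j in the set A_j = ∩_{i ≠ j} C_i that is nearest to C_j, i.e., realizing dist(A_j, C_j). -/
open Metric Set Module
open scoped RealInnerProductSpace

/-- If moving from `v` in direction `z` never decreases the norm (for small steps),
then `⟪v, z⟫ ≥ 0`. -/
lemma aux_inner_nonneg {E : Type*} [NormedAddCommGroup E] [InnerProductSpace ℝ E]
    {v z : E} (h : ∀ t : ℝ, 0 < t → t ≤ 1 → ‖v‖ ≤ ‖v + t • z‖) : 0 ≤ ⟪v, z⟫ := by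
  by_contra hneg
  push_neg at hneg
  have hz : z ≠ 0 := by
    rintro rfl
    simp at hneg
  have hz2 : (0:ℝ) < ‖z‖ ^ 2 := by
    have := norm_pos_iff.mpr hz
    positivity
  set t : ℝ := min 1 (-⟪v, z⟫ / ‖z‖ ^ 2) with ht_def
  have ht0 : 0 < t := lt_min one_pos (div_pos (by linarith) hz2)
  have ht1 : t ≤ 1 := min_le_left _ _
  have h2 : ‖v‖ ≤ ‖v + t • z‖ := h t ht0 ht1
  have hsq : ‖v + t • z‖ ^ 2 = ‖v‖ ^ 2 + 2 * (t * ⟪v, z⟫) + t ^ 2 * ‖z‖ ^ 2 := by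
    rw [norm_add_sq_real, real_inner_smul_right, norm_smul]
    rw [mul_pow]
    simp [abs_of_pos ht0]
  have htle : t * ‖z‖ ^ 2 ≤ -⟪v, z⟫ := by
    have hmin : t ≤ -⟪v, z⟫ / ‖z‖ ^ 2 := min_le_right _ _
    calc t * ‖z‖ ^ 2 ≤ (-⟪v, z⟫ / ‖z‖ ^ 2) * ‖z‖ ^ 2 := by nlinarith
    _ = -⟪v, z⟫ := by field_simp
  have hs : ‖v‖ ^ 2 ≤ ‖v + t • z‖ ^ 2 := by
    have := norm_nonneg v
    nlinarith
  nlinarith [mul_le_mul_of_nonneg_left htle ht0.le, mul_pos ht0 (neg_pos.mpr hneg)]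

set_option maxHeartbeats 2000000 in
/-- For a d-critical family, each partial intersection ∩_{i≠j} C_i has a
unique nearest point to C_j. -/
theorem unique_nearest_point (d : ℕ)
    (C : Fin (d + 1) → Set (EuclideanSpace ℝ (Fin d)))
    (hcomp : ∀ i, IsCompact (C i)) (hconv : ∀ i, Convex ℝ (C i))
    (hcrit : ∀ j, (⋂ i ∈ {i : Fin (d + 1) | i ≠ j}, C i).Nonempty)
    (hempty : (⋂ i, C i) = ∅) (j : Fin (d + 1)) :
    ∃! p, p ∈ (⋂ i ∈ {i : Fin (d + 1) | i ≠ j}, C i) ∧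
      ∀ q ∈ (⋂ i ∈ {i : Fin (d + 1) | i ≠ j}, C i),
        Metric.infDist p (C j) ≤ Metric.infDist q (C j) := by
  classical
  rcases Nat.eq_zero_or_pos d with rfl | hd
  · -- degenerate case : the ambient space is a single point
    haveI : Subsingleton (EuclideanSpace ℝ (Fin 0)) :=
      ⟨fun a b => by ext i; exact i.elim0⟩
    refine ⟨0, ⟨?_, ?_⟩, ?_⟩
    · simp only [Set.mem_iInter, Set.mem_setOf_eq]
      intro i hi
      haveI : Subsingleton (Fin (0 + 1)) := Fin.subsingleton_one
      exact absurd (Subsingleton.elim i j) hi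
    · intro q _
      rw [Subsingleton.elim q (0 : EuclideanSpace ℝ (Fin 0))]
    · intro y _
      exact Subsingleton.elim y 0
  -- main case
  set A := ⋂ i ∈ {i : Fin (d + 1) | i ≠ j}, C i with hA_def
  have hA_sub : ∀ i, i ≠ j → A ⊆ C i := fun i hi =>
    Set.biInter_subset_of_mem (show i ∈ {i : Fin (d + 1) | i ≠ j} from hi)
  have hA_conv : Convex ℝ A := by
    apply convex_iInter; intro i; exact convex_iInter fun _ => hconv i
  have hA_ne : A.Nonempty := hcrit j
  haveI : Nontrivial (Fin (d + 1)) :=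
    ⟨⟨⟨0, by omega⟩, ⟨1, by omega⟩, by simp [Fin.ext_iff]⟩⟩
  obtain ⟨i₀, hi₀⟩ := exists_ne j
  -- points provided by criticality
  set z : Fin (d + 1) → EuclideanSpace ℝ (Fin d) := fun i => (hcrit i).some with hz_def
  have hzmem : ∀ i k, k ≠ i → z i ∈ C k := by
    intro i k hk
    have h := (hcrit i).some_mem
    exact Set.mem_iInter₂.mp h k hk
  have hCj_ne : (C j).Nonempty := ⟨z i₀, hzmem i₀ j (Ne.symm hi₀)⟩
  have hA_cl : IsClosed A := isClosed_biInter fun i _ => (hcomp i).isClosed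
  have hA_cp : IsCompact A :=
    (hcomp i₀).of_isClosed_subset hA_cl (hA_sub i₀ hi₀)
  obtain ⟨p₁, hp₁A, hp₁min⟩ :=
    hA_cp.exists_isMinOn hA_ne (Metric.continuous_infDist_pt (C j)).continuousOn
  refine ⟨p₁, ⟨hp₁A, fun q hq => isMinOn_iff.mp hp₁min q hq⟩, ?_⟩
  rintro p₂ ⟨hp₂A, hp₂min⟩
  by_contra hne
  set δ := Metric.infDist p₁ (C j) with hδ_def
  have hδ₂ : Metric.infDist p₂ (C j) = δ :=
    le_antisymm (hp₂min p₁ hp₁A) (isMinOn_iff.mp hp₁min p₂ hp₂A)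
  have hp₁notC : p₁ ∉ C j := by
    intro hmem
    have hall : p₁ ∈ ⋂ i, C i := Set.mem_iInter.mpr (fun i => by
      by_cases h : i = j
      · rwa [h]
      · exact hA_sub i h hp₁A)
    rw [hempty] at hall
    exact hall
  have hδpos : 0 < δ := ((hcomp j).isClosed.notMem_iff_infDist_pos hCj_ne).mp hp₁notC
  obtain ⟨a₁, ha₁C, ha₁d⟩ := (hcomp j).exists_infDist_eq_dist hCj_ne p₁
  obtain ⟨a₂, ha₂C, ha₂d⟩ := (hcomp j).exists_infDist_eq_dist hCj_ne p₂
  have hv₁ : ‖p₁ - a₁‖ = δ := by rw [← dist_eq_norm]; exact ha₁d.symm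
  have hv₂ : ‖p₂ - a₂‖ = δ := by rw [← dist_eq_norm, ← ha₂d]; exact hδ₂
  set u := p₂ - p₁ with hu_def
  have hu0 : u ≠ 0 := sub_ne_zero.mpr (fun h => hne h)
  -- the segment [p₁,p₂] lies in A
  have hseg : ∀ s : ℝ, 0 ≤ s → s ≤ 1 → p₁ + s • u ∈ A := by
    intro s h0 h1
    have h := hA_conv hp₁A hp₂A (by linarith : (0:ℝ) ≤ 1 - s) h0 (by ring)
    have heq : p₁ + s • u = (1 - s) • p₁ + s • p₂ := by rw [hu_def]; module
    rw [heq]; exact h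
  -- the two difference vectors coincide
  have hkey : p₁ - a₁ = p₂ - a₂ := by
    have hbC : a₁ + (2⁻¹:ℝ) • (a₂ - a₁) ∈ C j := by
      have h := hconv j ha₁C ha₂C (by norm_num : (0:ℝ) ≤ 2⁻¹) (by norm_num : (0:ℝ) ≤ 2⁻¹)
        (by norm_num : (2⁻¹:ℝ) + 2⁻¹ = 1)
      have heq : a₁ + (2⁻¹:ℝ) • (a₂ - a₁) = (2⁻¹:ℝ) • a₁ + (2⁻¹:ℝ) • a₂ := by module
      rw [heq]; exact h
    have h1 : δ ≤ dist (p₁ + (2⁻¹:ℝ) • u) (a₁ + (2⁻¹:ℝ) • (a₂ - a₁)) :=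
      le_trans (isMinOn_iff.mp hp₁min _ (hseg 2⁻¹ (by norm_num) (by norm_num)))
        (Metric.infDist_le_dist_of_mem hbC)
    have heq2 : dist (p₁ + (2⁻¹:ℝ) • u) (a₁ + (2⁻¹:ℝ) • (a₂ - a₁))
        = ‖(2⁻¹:ℝ) • ((p₁ - a₁) + (p₂ - a₂))‖ := by
      rw [dist_eq_norm]; congr 1; rw [hu_def]; module
    have hsmul : ‖(2⁻¹:ℝ) • ((p₁ - a₁) + (p₂ - a₂))‖ = 2⁻¹ * ‖(p₁ - a₁) + (p₂ - a₂)‖ := by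
      rw [norm_smul]; norm_num
    have hle : ‖(p₁ - a₁) + (p₂ - a₂)‖ ≤ 2 * δ := by
      calc ‖(p₁ - a₁) + (p₂ - a₂)‖ ≤ ‖p₁ - a₁‖ + ‖p₂ - a₂‖ := norm_add_le _ _
      _ = 2 * δ := by rw [hv₁, hv₂]; ring
    have hnorm : ‖(p₁ - a₁) + (p₂ - a₂)‖ = 2 * δ := by
      rw [heq2, hsmul] at h1
      linarith
    have hsub : ‖(p₁ - a₁) - (p₂ - a₂)‖ ^ 2 = 0 := by
      have e1 := norm_add_sq_real (p₁ - a₁) (p₂ - a₂)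
      have e2 := norm_sub_sq_real (p₁ - a₁) (p₂ - a₂)
      rw [hnorm, hv₁, hv₂] at e1
      rw [hv₁, hv₂] at e2
      nlinarith
    have h0 : ‖(p₁ - a₁) - (p₂ - a₂)‖ = 0 := by
      have := sq_eq_zero_iff.mp hsub
      exact this
    exact sub_eq_zero.mp (norm_eq_zero.mp h0)
  set w := a₁ - p₁ with hw_def
  have hwnorm : ‖w‖ = δ := by rw [hw_def, norm_sub_rev]; exact hv₁
  have ha₂eq : a₂ = a₁ + u := by
    have h : a₂ = p₂ - (p₁ - a₁) := by rw [hkey]; abel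
    rw [h, hu_def]; abel
  -- halfspace containing A
  have hAle : ∀ x ∈ A, ⟪w, x - p₁⟫ ≤ 0 := by
    intro x hx
    have h0 : 0 ≤ ⟪-w, x - p₁⟫ := by
      apply aux_inner_nonneg
      intro t ht0 ht1
      have hpt : p₁ + t • (x - p₁) ∈ A := by
        have h := hA_conv hp₁A hx (by linarith : (0:ℝ) ≤ 1 - t) ht0.le (by ring)
        have heq : p₁ + t • (x - p₁) = (1 - t) • p₁ + t • x := by module
        rw [heq]; exact h
      have hdist : δ ≤ dist (p₁ + t • (x - p₁)) a₁ :=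
        le_trans (isMinOn_iff.mp hp₁min _ hpt) (Metric.infDist_le_dist_of_mem ha₁C)
      have heq : dist (p₁ + t • (x - p₁)) a₁ = ‖-w + t • (x - p₁)‖ := by
        rw [dist_eq_norm]; congr 1; rw [hw_def]; module
      rw [norm_neg, hwnorm, ← heq]
      exact hdist
    have hneg : ⟪-w, x - p₁⟫ = -⟪w, x - p₁⟫ := inner_neg_left _ _
    linarith [h0, hneg.symm.le]
  -- halfspace containing C j
  have hCge : ∀ c ∈ C j, δ ^ 2 ≤ ⟪w, c - p₁⟫ := by
    intro c hc
    have h0 : 0 ≤ ⟪-w, a₁ - c⟫ := by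
      apply aux_inner_nonneg
      intro t ht0 ht1
      have hpt : a₁ + t • (c - a₁) ∈ C j := by
        have h := hconv j ha₁C hc (by linarith : (0:ℝ) ≤ 1 - t) ht0.le (by ring)
        have heq : a₁ + t • (c - a₁) = (1 - t) • a₁ + t • c := by module
        rw [heq]; exact h
      have hdist : δ ≤ dist p₁ (a₁ + t • (c - a₁)) := Metric.infDist_le_dist_of_mem hpt
      have heq : dist p₁ (a₁ + t • (c - a₁)) = ‖-w + t • (a₁ - c)‖ := by
        rw [dist_eq_norm]; congr 1; rw [hw_def]; module
      rw [norm_neg, hwnorm, ← heq]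
      exact hdist
    have h1 : 0 ≤ ⟪w, c - a₁⟫ := by
      have e : a₁ - c = -(c - a₁) := by abel
      rw [e, inner_neg_neg] at h0
      exact h0
    have h2 : ⟪w, c - p₁⟫ = ⟪w, c - a₁⟫ + ⟪w, w⟫ := by
      rw [← inner_add_right]
      congr 1
      rw [hw_def]; abel
    have h3 : ⟪w, w⟫ = δ ^ 2 := by
      rw [real_inner_self_eq_norm_sq, hwnorm]
    linarith
  -- w is orthogonal to u
  have hwu : ⟪w, u⟫ = 0 := by
    have hge : 0 ≤ ⟪-w, -u⟫ := by
      apply aux_inner_nonneg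
      intro t ht0 ht1
      have hpt : a₁ + t • u ∈ C j := by
        have h := hconv j ha₁C ha₂C (by linarith : (0:ℝ) ≤ 1 - t) ht0.le (by ring)
        have heq : a₁ + t • u = (1 - t) • a₁ + t • a₂ := by rw [ha₂eq]; module
        rw [heq]; exact h
      have hdist : δ ≤ dist p₁ (a₁ + t • u) := Metric.infDist_le_dist_of_mem hpt
      have heq : dist p₁ (a₁ + t • u) = ‖-w + t • (-u)‖ := by
        rw [dist_eq_norm]; congr 1; rw [hw_def]; module
      rw [norm_neg, hwnorm, ← heq]
      exact hdist
    have hle : 0 ≤ ⟪-w, u⟫ := by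
      apply aux_inner_nonneg
      intro t ht0 ht1
      have hpt : a₂ - t • u ∈ C j := by
        have h := hconv j ha₂C ha₁C (by linarith : (0:ℝ) ≤ 1 - t) ht0.le (by ring)
        have heq : a₂ - t • u = (1 - t) • a₂ + t • a₁ := by rw [ha₂eq]; module
        rw [heq]; exact h
      have hdist : δ ≤ dist p₂ (a₂ - t • u) := by
        rw [← hδ₂]; exact Metric.infDist_le_dist_of_mem hpt
      have heq : dist p₂ (a₂ - t • u) = ‖-w + t • u‖ := by
        rw [dist_eq_norm]; congr 1
        have hw' : -w = p₂ - a₂ := by rw [hw_def, ← hkey]; abel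
        rw [hw']; module
      rw [norm_neg, hwnorm, ← heq]
      exact hdist
    have e1 : ⟪-w, -u⟫ = ⟪w, u⟫ := inner_neg_neg _ _
    have e2 : ⟪-w, u⟫ = -⟪w, u⟫ := inner_neg_left _ _
    linarith [hge, hle, e1.symm.le, e2.symm.le]
  -- numerical setup for the Helly argument
  have hu2 : (0:ℝ) < ‖u‖ ^ 2 := by
    have := norm_pos_iff.mpr hu0
    positivity
  set σ : Fin (d + 1) → ℝ := fun i => ⟪u, z i - p₁⟫ / ‖u‖ ^ 2 with hσ_def
  set M : ℝ := Finset.univ.sup' Finset.univ_nonempty (fun i => |σ i|) with hM_def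
  have hMi : ∀ i, |σ i| ≤ M := by
    intro i
    rw [hM_def]
    exact Finset.le_sup' (fun i => |σ i|) (Finset.mem_univ i)
  have hM0 : 0 ≤ M := le_trans (abs_nonneg (σ j)) (hMi j)
  set t₀ : ℝ := 1 / (2 * (1 + M)) with ht₀_def
  have h1M : (0:ℝ) < 1 + M := by linarith
  have ht₀pos : 0 < t₀ := by rw [ht₀_def]; positivity
  have hσbound : ∀ i, t₀ * (1 + |σ i|) ≤ 1 / 2 := by
    intro i
    have h2M : (0:ℝ) < 2 * (1 + M) := by linarith
    rw [ht₀_def, div_mul_eq_mul_div, one_mul, div_le_div_iff₀ h2M (by norm_num : (0:ℝ) < 2)]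
    nlinarith [hMi i, abs_nonneg (σ i)]
  have ht₀half : t₀ ≤ 1 / 2 := by
    have := hσbound j
    nlinarith [abs_nonneg (σ j), ht₀pos]
  have ht₀1 : t₀ < 1 := lt_of_le_of_lt ht₀half (by norm_num)
  set s : Fin (d + 1) → ℝ := fun i => (1 / 2 - t₀ * σ i) / (1 - t₀) with hs_def
  have hs01 : ∀ i, 0 ≤ s i ∧ s i ≤ 1 := by
    intro i
    have hb := hσbound i
    have habs1 : σ i ≤ |σ i| := le_abs_self _
    have habs2 : -|σ i| ≤ σ i := neg_abs_le _
    have h1 : t₀ * σ i ≤ 1 / 2 := by nlinarith [abs_nonneg (σ i)]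
    have h2 : 1 / 2 - t₀ * σ i ≤ 1 - t₀ := by nlinarith [abs_nonneg (σ i)]
    have hden : 0 < 1 - t₀ := by linarith
    have hsi : s i = (1 / 2 - t₀ * σ i) / (1 - t₀) := by rw [hs_def]
    constructor
    · rw [hsi]
      exact div_nonneg (by linarith) hden.le
    · rw [hsi]
      rw [div_le_one hden]
      exact h2
  set ε : ℝ := t₀ * δ ^ 2 with hε_def
  -- the hyperplane through the midpoint, as a subspace
  set U := (ℝ ∙ u)ᗮ with hU_def
  have hUrank : finrank ℝ U + 1 = d := by
    have h1 : finrank ℝ (ℝ ∙ u) = 1 := finrank_span_singleton hu0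
    have h2 := Submodule.finrank_add_finrank_orthogonal (K := (ℝ ∙ u))
    rw [h1, finrank_euclideanSpace_fin] at h2
    rw [hU_def]
    omega
  set m := p₁ + (2⁻¹:ℝ) • u with hm_def
  set G : Fin (d + 1) → Set U := fun i =>
    if i = j then {x : U | ε ≤ ⟪w, (m + (x : EuclideanSpace ℝ (Fin d))) - p₁⟫}
    else {x : U | (m + (x : EuclideanSpace ℝ (Fin d))) ∈ C i} with hG_def
  have hGconv : ∀ i ∈ (Finset.univ : Finset (Fin (d + 1))), Convex ℝ (G i) := by
    intro i _
    by_cases hij : i = j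
    · simp only [hG_def, if_pos hij]
      intro x hx y hy a b ha hb hab
      simp only [Set.mem_setOf_eq] at hx hy ⊢
      have hcoe : ((a • x + b • y : U) : EuclideanSpace ℝ (Fin d))
          = a • (x : EuclideanSpace ℝ (Fin d)) + b • (y : EuclideanSpace ℝ (Fin d)) := by
        simp
      have hb' : b = 1 - a := by linarith
      have heq : m + ((a • x + b • y : U) : EuclideanSpace ℝ (Fin d)) - p₁
          = a • (m + (x : EuclideanSpace ℝ (Fin d)) - p₁)
            + b • (m + (y : EuclideanSpace ℝ (Fin d)) - p₁) := by
        rw [hcoe, hb']; module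
      rw [heq, inner_add_right, real_inner_smul_right, real_inner_smul_right]
      have k1 := mul_le_mul_of_nonneg_left hx ha
      have k2 := mul_le_mul_of_nonneg_left hy hb
      have k3 : a * ε + b * ε = ε := by rw [hb']; ring
      linarith [k1, k2, k3]
    · simp only [hG_def, if_neg hij]
      intro x hx y hy a b ha hb hab
      simp only [Set.mem_setOf_eq] at hx hy ⊢
      have hcoe : ((a • x + b • y : U) : EuclideanSpace ℝ (Fin d))
          = a • (x : EuclideanSpace ℝ (Fin d)) + b • (y : EuclideanSpace ℝ (Fin d)) := by
        simp
      have hb' : b = 1 - a := by linarith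
      have heq : m + ((a • x + b • y : U) : EuclideanSpace ℝ (Fin d))
          = a • (m + (x : EuclideanSpace ℝ (Fin d)))
            + b • (m + (y : EuclideanSpace ℝ (Fin d))) := by
        rw [hcoe, hb']; module
      rw [heq]
      exact hconv i hx hy ha hb hab
  have hH : ∀ I : Finset (Fin (d + 1)), I ⊆ Finset.univ →
      I.card ≤ finrank ℝ U + 1 → (⋂ i ∈ I, G i).Nonempty := by
    intro I _ hIcard
    rw [hUrank] at hIcard
    by_cases hjI : j ∈ I
    · have hInu : ∃ i₁, i₁ ∉ I := by
        by_contra hall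
        push_neg at hall
        have hIu : I = Finset.univ := Finset.eq_univ_iff_forall.mpr hall
        rw [hIu, Finset.card_univ, Fintype.card_fin] at hIcard
        omega
      obtain ⟨i₁, hi₁I⟩ := hInu
      have hi₁j : i₁ ≠ j := fun h => hi₁I (h ▸ hjI)
      set q := (1 - t₀) • (p₁ + (s i₁) • u) + t₀ • (z i₁) with hq_def
      have hσi : σ i₁ = ⟪u, z i₁ - p₁⟫ / ‖u‖ ^ 2 := by rw [hσ_def]
      have hzin : ⟪u, z i₁ - p₁⟫ = σ i₁ * ‖u‖ ^ 2 := by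
        rw [hσi]
        field_simp
      have hsi : s i₁ = (1 / 2 - t₀ * σ i₁) / (1 - t₀) := by rw [hs_def]
      have h1t : (1:ℝ) - t₀ ≠ 0 := by linarith
      have hs_eq : (1 - t₀) * (s i₁) = 1 / 2 - t₀ * σ i₁ := by
        rw [hsi]
        field_simp
      have hinner_qm : ⟪u, q - m⟫ = 0 := by
        have hqm : q - m = ((1 - t₀) * (s i₁) - 2⁻¹) • u + t₀ • (z i₁ - p₁) := by
          rw [hq_def, hm_def]; module
        rw [hqm, inner_add_right, real_inner_smul_right, real_inner_smul_right, hzin,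
          real_inner_self_eq_norm_sq, hs_eq]
        ring
      have hqmU : q - m ∈ U := by
        rw [hU_def]
        exact Submodule.mem_orthogonal_singleton_iff_inner_right.mpr hinner_qm
      refine ⟨⟨q - m, hqmU⟩, ?_⟩
      apply Set.mem_iInter₂.mpr
      intro i hiI
      by_cases hij : i = j
      · simp only [hG_def, if_pos hij, Set.mem_setOf_eq]
        have hsimp : m + ((⟨q - m, hqmU⟩ : U) : EuclideanSpace ℝ (Fin d)) - p₁ = q - p₁ := by
          simp only [Submodule.coe_mk]
          abel
        rw [hsimp]
        have hq_p : q - p₁ = ((1 - t₀) * (s i₁)) • u + t₀ • (z i₁ - p₁) := by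
          rw [hq_def]; module
        rw [hq_p, inner_add_right, real_inner_smul_right, real_inner_smul_right, hwu]
        have hzCj : z i₁ ∈ C j := hzmem i₁ j (Ne.symm hi₁j)
        have hge := hCge (z i₁) hzCj
        rw [hε_def]
        nlinarith [ht₀pos.le]
      · simp only [hG_def, if_neg hij, Set.mem_setOf_eq]
        have hsimp : m + ((⟨q - m, hqmU⟩ : U) : EuclideanSpace ℝ (Fin d)) = q := by
          simp only [Submodule.coe_mk]
          abel
        rw [hsimp]
        have hiI₁ : i ≠ i₁ := fun h => hi₁I (h ▸ hiI)
        have h1 : p₁ + (s i₁) • u ∈ C i :=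
          hA_sub i hij (hseg (s i₁) (hs01 i₁).1 (hs01 i₁).2)
        have h2 : z i₁ ∈ C i := hzmem i₁ i hiI₁
        have h := hconv i h1 h2 (by linarith : (0:ℝ) ≤ 1 - t₀) ht₀pos.le (by ring)
        rw [hq_def]
        exact h
    · refine ⟨0, ?_⟩
      apply Set.mem_iInter₂.mpr
      intro i hiI
      have hij : i ≠ j := fun h => hjI (h ▸ hiI)
      simp only [hG_def, if_neg hij, Set.mem_setOf_eq]
      have hmem := hA_sub i hij (hseg 2⁻¹ (by norm_num) (by norm_num))
      simpa [hm_def] using hmem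
  obtain ⟨x, hx⟩ := Convex.helly_theorem' (s := (Finset.univ : Finset (Fin (d + 1)))) hGconv hH
  have hxi : ∀ i, x ∈ G i := fun i => Set.mem_iInter₂.mp hx i (Finset.mem_univ i)
  have hqA : (m + (x : EuclideanSpace ℝ (Fin d))) ∈ A := by
    apply Set.mem_iInter₂.mpr
    intro i hi
    have h := hxi i
    simp only [hG_def, if_neg (show i ≠ j from hi), Set.mem_setOf_eq] at h
    exact h
  have hqj : ε ≤ ⟪w, (m + (x : EuclideanSpace ℝ (Fin d))) - p₁⟫ := by
    have h := hxi j
    simp only [hG_def, if_pos rfl, Set.mem_setOf_eq] at h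
    exact h
  have hfin := hAle _ hqA
  have hεpos : 0 < ε := by rw [hε_def]; positivity
  linarith
end

section
/- Let Γ be a map assigning to each point x of a finite set X ⊂ R^d a nonempty closed convex subset Γ(x) of R^d, such that for every subset N ⊆ X the convex hull of N is contained in ∪_{x ∈ N} Γ(x). Then ∩_{x ∈ X} Γ(x) is nonempty. -/
/-!
Replacing each `Γ x` by `Γ x ∩ conv X` gives compact convex sets whose union `conv X` is convex,
and by induction on `X` any `|X| - 1` of them have a common point. Berge's intersection theorem
then yields a point common to all of them. Berge's theorem is itself proved by induction: if the
sets `C i`, `i ≠ i₀`, meet but miss `C i₀`, a hyperplane `H` strictly separates `C i₀` from their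
intersection; by convexity (intermediate values of the separating functional) the family
`C i ∩ H`, `i ≠ i₀`, again satisfies the hypotheses, and its common point would lie strictly on
one side of `H`.
-/

open Set

variable {E : Type*} [AddCommGroup E] [Module ℝ E]

def IsKKMMap (X : Finset E) (Γ : E → Set E) : Prop :=
  ∀ N ⊆ X, convexHull ℝ (N : Set E) ⊆ ⋃ x ∈ N, Γ x

theorem IsKKMMap.mono {X N : Finset E} {Γ : E → Set E} (h : IsKKMMap X Γ) (hN : N ⊆ X) :
    IsKKMMap N Γ :=
  fun M hM => h M (hM.trans hN)

variable [TopologicalSpace E] [IsTopologicalAddGroup E] [ContinuousSMul ℝ E]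

theorem Convex.inter_preimage_singleton_nonempty {T : Set E} (hT : Convex ℝ T)
    (f : StrongDual ℝ E) {a b : E} {α : ℝ} (ha : a ∈ T) (hb : b ∈ T) (hfa : f a ≤ α)
    (hfb : α ≤ f b) : (T ∩ f ⁻¹' {α}).Nonempty := by
  obtain ⟨c, hcT, hc⟩ :=
    hT.isPreconnected.intermediate_value ha hb f.continuous.continuousOn ⟨hfa, hfb⟩
  exact ⟨c, hcT, hc⟩

variable [LocallyConvexSpace ℝ E] [T2Space E]

theorem nonempty_biInter_of_convex_biUnion {ι : Type*} [DecidableEq ι] (s : Finset ι)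
    {C : ι → Set E}
    (hcomp : ∀ i ∈ s, IsCompact (C i)) (hconv : ∀ i ∈ s, Convex ℝ (C i))
    (hne : (⋃ i ∈ s, C i).Nonempty) (hunion : Convex ℝ (⋃ i ∈ s, C i))
    (herase : ∀ i ∈ s, (⋂ j ∈ s.erase i, C j).Nonempty) :
    (⋂ i ∈ s, C i).Nonempty := by
  induction s using Finset.induction_on generalizing C with
  | empty => simp at hne
  | insert i₀ s hi₀ ih =>
  rcases s.eq_empty_or_nonempty with rfl | ⟨i₁, hi₁⟩
  · simpa using hne
  simp only [Finset.mem_insert, forall_eq_or_imp] at hcomp hconv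
  by_contra hempty
  set I := ⋂ j ∈ s, C j
  obtain ⟨b, hb⟩ : I.Nonempty := by
    simpa only [Finset.erase_insert hi₀] using herase i₀ (s.mem_insert_self i₀)
  have hIclosed : IsClosed I := isClosed_biInter fun j hj => (hcomp.2 j hj).isClosed
  have hIconv : Convex ℝ I := convex_iInter₂ fun j hj => hconv.2 j hj
  have hdisj : Disjoint (C i₀) I := by
    rw [Set.disjoint_iff_inter_eq_empty]
    simpa [Finset.set_biInter_insert, not_nonempty_iff_eq_empty] using hempty
  obtain ⟨f, u, v, hfu, huv, hfv⟩ :=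
    geometric_hahn_banach_compact_closed hconv.1 hcomp.1 hIconv hIclosed hdisj
  set H := f ⁻¹' {u}
  have hHconv : Convex ℝ H := (convex_singleton u).linear_preimage f.toLinearMap
  have hother : ∀ y ∈ s, ((⋂ j ∈ s.erase y, C j) ∩ C i₀).Nonempty := by
    intro y hy
    have := herase y (Finset.mem_insert_of_mem hy)
    rwa [Finset.erase_insert_of_ne (ne_of_mem_of_not_mem hy hi₀).symm,
      Finset.set_biInter_insert, inter_comm] at this
  have hmeet : ∀ {T : Set E}, Convex ℝ T → (T ∩ C i₀).Nonempty → b ∈ T → (T ∩ H).Nonempty :=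
    fun hT ⟨_, haT, ha⟩ hbT =>
      hT.inter_preimage_singleton_nonempty f haT hbT (hfu _ ha).le (huv.trans (hfv b hb)).le
  have hunion' : (⋃ j ∈ s, C j ∩ H) = (⋃ j ∈ insert i₀ s, C j) ∩ H := by
    have hC₀H : C i₀ ∩ H = ∅ :=
      eq_empty_of_forall_notMem fun z hz => (hfu z hz.1).ne hz.2
    rw [Finset.set_biUnion_insert, union_inter_distrib_right, hC₀H, empty_union, iUnion₂_inter]
  obtain ⟨p, hp⟩ := ih (C := fun j => C j ∩ H)
    (fun j hj => (hcomp.2 j hj).inter_right (isClosed_singleton.preimage f.continuous))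
    (fun j hj => (hconv.2 j hj).inter hHconv)
    (by
      obtain ⟨a, -, ha⟩ := hother i₁ hi₁
      rw [hunion']
      exact hmeet hunion ⟨a, mem_biUnion (s.mem_insert_self i₀) ha, ha⟩
        (mem_biUnion (Finset.mem_insert_of_mem hi₁) (mem_iInter₂.1 hb i₁ hi₁)))
    (by rw [hunion']; exact hunion.inter hHconv)
    (by
      intro y hy
      obtain ⟨p, hpT, hpH⟩ :=
        hmeet (convex_iInter₂ fun j hj => hconv.2 j (Finset.mem_of_mem_erase hj)) (hother y hy)
          (mem_iInter₂.2 fun j hj => mem_iInter₂.1 hb j (Finset.mem_of_mem_erase hj))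
      exact ⟨p, mem_iInter₂.2 fun j hj => ⟨mem_iInter₂.1 hpT j hj, hpH⟩⟩)
  have hpI : p ∈ I := mem_iInter₂.2 fun j hj => (mem_iInter₂.1 hp j hj).1
  have hpH : f p = u := (mem_iInter₂.1 hp i₁ hi₁).2
  linarith [hfv p hpI]

theorem IsKKMMap.nonempty_biInter_inter_convexHull
    {X : Finset E} {Γ : E → Set E} (h : IsKKMMap X Γ) (hcl : ∀ x ∈ X, IsClosed (Γ x))
    (hcv : ∀ x ∈ X, Convex ℝ (Γ x)) :
    (⋂ x ∈ X, Γ x ∩ convexHull ℝ (X : Set E)).Nonempty := by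
  classical
  induction X using Finset.strongInduction with
  | H X ih =>
  rcases X.eq_empty_or_nonempty with rfl | ⟨x₀, hx₀⟩
  · simp
  have hunion : ⋃ x ∈ X, Γ x ∩ convexHull ℝ (X : Set E) = convexHull ℝ (X : Set E) := by
    rw [← iUnion₂_inter]
    exact inter_eq_right.2 (h X subset_rfl)
  refine nonempty_biInter_of_convex_biUnion X
    (fun x hx => (X.finite_toSet.isCompact_convexHull ℝ).inter_left (hcl x hx))
    (fun x hx => (hcv x hx).inter (convex_convexHull ℝ _))
    (by rw [hunion]; exact ⟨x₀, subset_convexHull ℝ _ hx₀⟩)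
    (by rw [hunion]; exact convex_convexHull ℝ _)
    fun x hx => ?_
  obtain ⟨p, hp⟩ := ih (X.erase x) (Finset.erase_ssubset hx) (h.mono (X.erase_subset x))
    (fun y hy => hcl y (Finset.mem_of_mem_erase hy))
    (fun y hy => hcv y (Finset.mem_of_mem_erase hy))
  refine ⟨p, mem_iInter₂.2 fun y hy => ?_⟩
  obtain ⟨hpΓ, hpconv⟩ := mem_iInter₂.1 hp y hy
  exact ⟨hpΓ, convexHull_mono (by simp) hpconv⟩

theorem finite_kkm_general (d : ℕ) (X : Finset (EuclideanSpace ℝ (Fin d)))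
    (Γ : EuclideanSpace ℝ (Fin d) → Set (EuclideanSpace ℝ (Fin d)))
    (hcl : ∀ x ∈ X, IsClosed (Γ x))
    (hcv : ∀ x ∈ X, Convex ℝ (Γ x))
    (hkkm : ∀ N ⊆ X, convexHull ℝ (N : Set (EuclideanSpace ℝ (Fin d))) ⊆
      ⋃ x ∈ N, Γ x) :
    (⋂ x ∈ X, Γ x).Nonempty :=
  (IsKKMMap.nonempty_biInter_inter_convexHull hkkm hcl hcv).mono <|
    iInter₂_mono fun _ _ => inter_subset_left

/-- Finite KKM theorem with closed convex values (Ben-El-Mechaiekh). -/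
theorem finite_kkm (d : ℕ) (X : Finset (EuclideanSpace ℝ (Fin d)))
    (Γ : EuclideanSpace ℝ (Fin d) → Set (EuclideanSpace ℝ (Fin d)))
    (hne : ∀ x ∈ X, (Γ x).Nonempty)
    (hcl : ∀ x ∈ X, IsClosed (Γ x))
    (hcv : ∀ x ∈ X, Convex ℝ (Γ x))
    (hkkm : ∀ N ⊆ X, convexHull ℝ (N : Set (EuclideanSpace ℝ (Fin d))) ⊆
      ⋃ x ∈ N, Γ x) :
    (⋂ x ∈ X, Γ x).Nonempty :=
  finite_kkm_general d X Γ hcl hcv hkkm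
end

section
/- Let {C_0, C_1, ..., C_d} be a d-critical family in R^d and let D be a bounded connected component of R^d \ (C_0 ∪ ... ∪ C_d). Then D is contained in the convex hull of any points a_0, ..., a_d where a_j ∈ ∩_{i≠j} C_i for each j. -/
/-!
Let `y` lie in the bounded component. Every ray from `y` leaves the component, so it meets some
`C i`. Apply Radon's theorem to the `d + 2` points `y, a 0, …, a d`: some point `p` lies both in
the hull of the `a j` with `j ∈ I` and in the hull of `y` together with the `a j` with `j ∈ J`,
for disjoint `I`, `J`. If `p ≠ y`, the ray from `y` through `p` meets every `C k` (through `p`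
when `k ∉ I`, beyond `p` when `k ∉ J`), while the opposite ray meets some `C k`; convexity of that
`C k` then puts `y` in it, which is absurd. Hence `p = y`, and `y` lies in the hull of the `a j`.
-/

open Set

theorem not_isBounded_image_Ici_add_smul {E : Type*} [NormedAddCommGroup E] [NormedSpace ℝ E]
    (y : E) {v : E} (hv : v ≠ 0) :
    ¬ Bornology.IsBounded ((fun t : ℝ => y + t • v) '' Ici 0) := by
  intro hbd
  obtain ⟨M, hM⟩ := isBounded_iff_forall_norm_le.1 hbd
  have hvpos : 0 < ‖v‖ := norm_pos_iff.2 hv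
  set t := (max M 0 + ‖y‖ + 1) / ‖v‖
  have ht : 0 ≤ t := by positivity
  have htv : ‖t • v‖ = max M 0 + ‖y‖ + 1 := by
    rw [norm_smul, Real.norm_of_nonneg ht, div_mul_cancel₀ _ hvpos.ne']
  have hle : ‖t • v‖ ≤ ‖y‖ + ‖y + t • v‖ := by
    simpa using norm_sub_le (y + t • v) y |>.trans_eq (add_comm _ _)
  linarith [hM _ ⟨t, ht, rfl⟩, le_max_left M 0]

theorem exists_pos_add_smul_notMem_of_isBounded_connectedComponentIn {E : Type*}
    [NormedAddCommGroup E] [NormedSpace ℝ E] {U : Set E} {x y v : E}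
    (hbd : Bornology.IsBounded (connectedComponentIn U x))
    (hy : y ∈ connectedComponentIn U x) (hv : v ≠ 0) :
    ∃ t > (0 : ℝ), y + t • v ∉ U := by
  by_contra! hU
  have hray : (fun t : ℝ => y + t • v) '' Ici 0 ⊆ U := by
    rintro _ ⟨t, ht, rfl⟩
    rcases (mem_Ici.1 ht).eq_or_lt with rfl | ht
    · simpa using connectedComponentIn_subset _ _ hy
    · exact hU t ht
  have hconn : IsPreconnected ((fun t : ℝ => y + t • v) '' Ici 0) :=
    isPreconnected_Ici.image _ (by fun_prop)
  refine not_isBounded_image_Ici_add_smul y hv (hbd.subset ?_)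
  rw [connectedComponentIn_eq hy]
  exact hconn.subset_connectedComponentIn ⟨0, self_mem_Ici, by simp⟩ hray

section

variable {E : Type*} [AddCommGroup E] [Module ℝ E]

theorem Convex.mem_of_add_smul_mem_of_sub_smul_mem {K : Set E} (hK : Convex ℝ K) {y v : E}
    {s t : ℝ} (hs : 0 < s) (ht : 0 < t) (hsK : y + s • v ∈ K) (htK : y - t • v ∈ K) :
    y ∈ K := by
  convert hK hsK htK (by positivity : 0 ≤ t / (s + t)) (by positivity : 0 ≤ s / (s + t))
    (by field_simp; ring) using 1
  match_scalars <;> field_simp <;> ring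

theorem exists_pos_add_smul_sub_mem_of_mem_convexHull_insert {K T : Set E}
    (hTK : convexHull ℝ T ⊆ K) {y p : E} (hp : p ∈ convexHull ℝ (insert y T)) (hpy : p ≠ y) :
    ∃ s > (0 : ℝ), y + s • (p - y) ∈ K := by
  rcases T.eq_empty_or_nonempty with rfl | hT
  · simp [hpy] at hp
  rw [convexHull_insert hT, mem_convexJoin] at hp
  obtain ⟨y, rfl, q, hq, α, β, -, hβ, hαβ, rfl⟩ := hp
  have hβ0 : β ≠ 0 := by rintro rfl; simp_all
  refine ⟨β⁻¹, by positivity, ?_⟩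
  obtain rfl : α = 1 - β := eq_sub_of_add_eq hαβ
  rw [show (1 - β) • y + β • q - y = β • (q - y) by module, smul_smul, inv_mul_cancel₀ hβ0,
    one_smul, add_sub_cancel]
  exact hTK hq

variable {ι : Type*} {C : ι → Set E} {a : ι → E} {y : E}

theorem convexHull_image_subset_of_notMem {k : ι} (hC : Convex ℝ (C k))
    (ha : ∀ i j, j ≠ i → a j ∈ C i) {I : Set ι} (hk : k ∉ I) : convexHull ℝ (a '' I) ⊆ C k :=
  convexHull_min (image_subset_iff.2 fun j hj => ha k j (ne_of_mem_of_not_mem hj hk)) hC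

theorem eq_of_mem_convexHull_image_of_mem_convexHull_insert_image
    (hC : ∀ i, Convex ℝ (C i)) (ha : ∀ i j, j ≠ i → a j ∈ C i) (hy : ∀ i, y ∉ C i)
    (hray : ∀ v ≠ 0, ∃ i, ∃ t > (0 : ℝ), y + t • v ∈ C i)
    {I J : Set ι} (hIJ : Disjoint I J) {p : E} (hpI : p ∈ convexHull ℝ (a '' I))
    (hpJ : p ∈ convexHull ℝ (insert y (a '' J))) : p = y := by
  by_contra hpy
  have hforward : ∀ k, ∃ s > (0 : ℝ), y + s • (p - y) ∈ C k := by
    intro k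
    by_cases hk : k ∈ I
    · exact exists_pos_add_smul_sub_mem_of_mem_convexHull_insert
        (convexHull_image_subset_of_notMem (hC k) ha (hIJ.notMem_of_mem_left hk)) hpJ hpy
    · exact ⟨1, one_pos, by simpa using convexHull_image_subset_of_notMem (hC k) ha hk hpI⟩
  obtain ⟨k, t, ht, hbackward⟩ := hray (-(p - y)) (neg_ne_zero.2 (sub_ne_zero.2 hpy))
  obtain ⟨s, hs, hsk⟩ := hforward k
  rw [smul_neg, ← sub_eq_add_neg] at hbackward
  exact hy k ((hC k).mem_of_add_smul_mem_of_sub_smul_mem hs ht hsk hbackward)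

theorem mem_convexHull_range_of_forall_exists_add_smul_mem [Fintype ι] [FiniteDimensional ℝ E]
    (hcard : Module.finrank ℝ E < Fintype.card ι)
    (hC : ∀ i, Convex ℝ (C i)) (ha : ∀ i j, j ≠ i → a j ∈ C i) (hy : ∀ i, y ∉ C i)
    (hray : ∀ v ≠ 0, ∃ i, ∃ t > (0 : ℝ), y + t • v ∈ C i) :
    y ∈ convexHull ℝ (range a) := by
  let f : Option ι → E := fun o => o.elim y a
  have hdep : ¬ AffineIndependent ℝ f := fun hf => by
    have hcard_le := hf.card_le_finrank_succ
    have hspan_le := Submodule.finrank_le (vectorSpan ℝ (range f))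
    rw [Fintype.card_option] at hcard_le
    omega
  have himage : ∀ I : Set (Option ι), f '' I ⊆ insert y (a '' (some ⁻¹' I)) := by
    rintro I _ ⟨_ | j, hj, rfl⟩
    · exact mem_insert _ _
    · exact mem_insert_of_mem _ (mem_image_of_mem _ hj)
  have himage_some : ∀ I : Set (Option ι), none ∉ I → f '' I ⊆ a '' (some ⁻¹' I) := by
    rintro I hI _ ⟨_ | j, hj, rfl⟩
    · exact absurd hj hI
    · exact mem_image_of_mem _ hj
  have hpartition : ∀ I : Set (Option ι), none ∉ I → ∀ p ∈ convexHull ℝ (f '' I),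
      p ∈ convexHull ℝ (f '' Iᶜ) → y ∈ convexHull ℝ (range a) := by
    intro I hI p hpI hpJ
    have hpI' := convexHull_mono (himage_some I hI) hpI
    obtain rfl := eq_of_mem_convexHull_image_of_mem_convexHull_insert_image hC ha hy hray
      (disjoint_compl_right.preimage some) hpI' (convexHull_mono (himage Iᶜ) hpJ)
    exact convexHull_mono (image_subset_range _ _) hpI'
  obtain ⟨I, p, hpI, hpJ⟩ := Convex.radon_partition hdep
  by_cases hI : none ∈ I
  · exact hpartition Iᶜ (not_not_intro hI) p hpJ (by rwa [compl_compl])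
  · exact hpartition I hI p hpI hpJ

end

theorem hollow_subset_hull_general (d : ℕ)
    (C : Fin (d + 1) → Set (EuclideanSpace ℝ (Fin d)))
    (hconv : ∀ i, Convex ℝ (C i))
    (x : EuclideanSpace ℝ (Fin d))
    (D : Set (EuclideanSpace ℝ (Fin d)))
    (hD : D = connectedComponentIn (⋃ i, C i)ᶜ x)
    (hbd : Bornology.IsBounded D)
    (a : Fin (d + 1) → EuclideanSpace ℝ (Fin d))
    (ha : ∀ j, a j ∈ ⋂ i ∈ {i : Fin (d + 1) | i ≠ j}, C i) :
    D ⊆ convexHull ℝ (Set.range a) := by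
  subst hD
  intro y hy
  have hyC : ∀ i, y ∉ C i := fun i hi =>
    connectedComponentIn_subset _ _ hy (mem_iUnion_of_mem i hi)
  have hray : ∀ v ≠ 0, ∃ i, ∃ t > (0 : ℝ), y + t • v ∈ C i := fun v hv => by
    obtain ⟨t, ht, hmem⟩ := exists_pos_add_smul_notMem_of_isBounded_connectedComponentIn hbd hy hv
    obtain ⟨i, hi⟩ := mem_iUnion.1 (not_not.1 hmem)
    exact ⟨i, t, ht, hi⟩
  refine mem_convexHull_range_of_forall_exists_add_smul_mem (by simp) hconv
    (fun i j hji => ?_) hyC hray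
  simpa using mem_iInter₂.1 (ha j) i hji.symm

/-- The hollow enclosed by a d-critical family is contained in the convex hull
of any choice of points a_j ∈ ∩_{i≠j} C_i. -/
theorem hollow_subset_hull (d : ℕ)
    (C : Fin (d + 1) → Set (EuclideanSpace ℝ (Fin d)))
    (hcomp : ∀ i, IsCompact (C i)) (hconv : ∀ i, Convex ℝ (C i))
    (hcrit : ∀ j, (⋂ i ∈ {i : Fin (d + 1) | i ≠ j}, C i).Nonempty)
    (hempty : (⋂ i, C i) = ∅)
    (x : EuclideanSpace ℝ (Fin d)) (hx : x ∈ (⋃ i, C i)ᶜ)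
    (D : Set (EuclideanSpace ℝ (Fin d)))
    (hD : D = connectedComponentIn (⋃ i, C i)ᶜ x)
    (hbd : Bornology.IsBounded D)
    (a : Fin (d + 1) → EuclideanSpace ℝ (Fin d))
    (ha : ∀ j, a j ∈ ⋂ i ∈ {i : Fin (d + 1) | i ≠ j}, C i) :
    D ⊆ convexHull ℝ (Set.range a) :=
  hollow_subset_hull_general d C hconv x D hD hbd a ha
end

section
/- Let {C_0, ..., C_d} be a d-critical family in R^d. Define a cage as a closed set containing base points a_i ∈ ∩_{h≠i} C_h for each i = 0,...,d. Then there exist d+1 points (namely the unique nearest points p_0,...,p_d from ∩_{h≠j}C_h to C_j) that belong to every convex cage carried by the family. -/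
/-!
Let `P` be the point of `K = ⋂_{h ≠ j} C_h` nearest to `C_j`, and `c` its nearest point in `C_j`;
then `P ∉ C_j`, and the hyperplane through `P` normal to `c - P` has `K` weakly on one side and
`C_j` strictly on the other. Given base points `a_i ∈ ⋂_{h ≠ i} C_h`, Radon's theorem applied to
the `d + 2` points `P, a_0, …, a_d` yields a point `x` in the convex hull of any `d + 1` of them.
Omitting `a_h` for `h ≠ j` shows `x ∈ C_h`, so `x ∈ K`; omitting `a_j` leaves `P` and points of
`C_j`, which forces `x = P`; omitting `P` then puts `P` in the convex hull of the base points,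
hence in every convex cage.
-/

open Metric Set Module
open scoped RealInnerProductSpace

theorem exists_forall_mem_convexHull_image_compl_singleton {ι E : Type*} [Fintype ι]
    [AddCommGroup E] [Module ℝ E] [FiniteDimensional ℝ E] (f : ι → E)
    (hcard : finrank ℝ E + 1 < Fintype.card ι) :
    ∃ x, ∀ k, x ∈ convexHull ℝ (f '' {k}ᶜ) := by
  have hdep : ¬ AffineIndependent ℝ f := fun hf => by
    have := hf.card_le_finrank_succ
    have := Submodule.finrank_le (vectorSpan ℝ (range f))
    omega
  obtain ⟨I, x, hxI, hxIc⟩ := Convex.radon_partition hdep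
  refine ⟨x, fun k => ?_⟩
  by_cases hk : k ∈ I
  · exact convexHull_mono (image_mono fun i (hi : i ∉ I) (hik : i = k) => hi (hik ▸ hk)) hxIc
  · exact convexHull_mono (image_mono fun i (hi : i ∈ I) (hik : i = k) => hk (hik ▸ hi)) hxI

section InnerProductSpace

variable {F : Type*} [NormedAddCommGroup F] [InnerProductSpace ℝ F]

theorem real_inner_sub_nonpos_of_forall_norm_sub_le {K : Set F} (hK : Convex ℝ K) {u v : F}
    (hv : v ∈ K) (hmin : ∀ w ∈ K, ‖u - v‖ ≤ ‖u - w‖) : ∀ w ∈ K, ⟪u - v, w - v⟫ ≤ 0 := by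
  have : Nonempty K := ⟨⟨v, hv⟩⟩
  refine (norm_eq_iInf_iff_real_inner_le_zero hK hv).1 (le_antisymm ?_ ?_)
  · exact le_ciInf fun w => hmin w w.2
  · exact ciInf_le (f := fun w : K => ‖u - w‖) ⟨0, forall_mem_range.2 fun _ => norm_nonneg _⟩
      ⟨v, hv⟩

theorem exists_real_inner_separation_of_forall_infDist_le [ProperSpace F] {K C : Set F}
    (hK : Convex ℝ K) (hC : Convex ℝ C) (hCc : IsClosed C) (hCne : C.Nonempty) {P : F}
    (hP : P ∈ K) (hPC : P ∉ C) (hmin : ∀ x ∈ K, infDist P C ≤ infDist x C) :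
    ∃ u : F, (∀ x ∈ K, ⟪x - P, u⟫ ≤ 0) ∧ ∀ y ∈ C, 0 < ⟪y - P, u⟫ := by
  obtain ⟨c, hc, hPc⟩ := hCc.exists_infDist_eq_dist hCne P
  have hc_near : ∀ y ∈ C, ⟪P - c, y - c⟫ ≤ 0 :=
    real_inner_sub_nonpos_of_forall_norm_sub_le hC hc fun y hy => by
      rw [← dist_eq_norm, ← dist_eq_norm, ← hPc]
      exact infDist_le_dist_of_mem hy
  have hP_near : ∀ x ∈ K, ⟪c - P, x - P⟫ ≤ 0 :=
    real_inner_sub_nonpos_of_forall_norm_sub_le hK hP fun x hx => by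
      rw [← dist_eq_norm, ← dist_eq_norm, dist_comm, ← hPc, dist_comm]
      exact (hmin x hx).trans (infDist_le_dist_of_mem hc)
  refine ⟨c - P, fun x hx => real_inner_comm (c - P) (x - P) ▸ hP_near x hx, fun y hy => ?_⟩
  have hcP : 0 < ‖c - P‖ := norm_pos_iff.2 (sub_ne_zero.2 fun h => hPC (h ▸ hc))
  have hyc : ⟪y - c, c - P⟫ = -⟪P - c, y - c⟫ := by
    rw [← neg_sub P c, inner_neg_right, real_inner_comm]
  calc 0 < ‖c - P‖ ^ 2 := by positivity
    _ ≤ ⟪y - c, c - P⟫ + ‖c - P‖ ^ 2 := by linarith [hc_near y hy]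
    _ = ⟪y - P, c - P⟫ := by
      rw [← real_inner_self_eq_norm_sq, ← inner_add_left, sub_add_sub_cancel]

theorem convex_insert_setOf_real_inner_sub_pos (P u : F) :
    Convex ℝ (insert P {y | 0 < ⟪y - P, u⟫}) := by
  refine convex_iff_forall_pos.2 fun x hx y hy a b ha hb hab => ?_
  have hg : ⟪a • x + b • y - P, u⟫ = a * ⟪x - P, u⟫ + b * ⟪y - P, u⟫ := by
    rw [← real_inner_smul_left, ← real_inner_smul_left, ← inner_add_left]
    congr 1
    rw [eq_sub_of_add_eq hab]
    module
  rcases hx with rfl | hx <;> rcases hy with rfl | hy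
  · exact Or.inl (Convex.combo_self hab _)
  · exact Or.inr (by simpa [hg] using mul_pos hb hy)
  · exact Or.inr (by simpa [hg] using mul_pos ha hx)
  · right
    show 0 < ⟪a • x + b • y - P, u⟫
    rw [hg]
    exact add_pos (mul_pos ha hx) (mul_pos hb hy)

theorem mem_convexHull_range_of_forall_infDist_le [FiniteDimensional ℝ F] {ι : Type*}
    [Fintype ι] (hcard : finrank ℝ F < Fintype.card ι) {C : ι → Set F}
    (hconv : ∀ i, Convex ℝ (C i)) (hempty : ⋂ i, C i = ∅) {j : ι} (hCj : IsClosed (C j))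
    (hCjne : (C j).Nonempty) {P : F} (hP : P ∈ ⋂ i ∈ {i | i ≠ j}, C i)
    (hmin : ∀ q ∈ ⋂ i ∈ {i | i ≠ j}, C i, infDist P (C j) ≤ infDist q (C j))
    (a : ι → F) (ha : ∀ i, a i ∈ ⋂ h ∈ {h | h ≠ i}, C h) : P ∈ convexHull ℝ (range a) := by
  have hPC : P ∉ C j := fun hPj =>
    eq_empty_iff_forall_notMem.1 hempty P <| mem_iInter.2 fun i => by
      rcases eq_or_ne i j with rfl | hij
      exacts [hPj, mem_iInter₂.1 hP i hij]
  obtain ⟨u, hKu, hCu⟩ := exists_real_inner_separation_of_forall_infDist_le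
    (convex_iInter₂ fun i _ => hconv i) (hconv j) hCj hCjne hP hPC hmin
  let f : Option ι → F := fun o => o.elim P a
  obtain ⟨x, hx⟩ := exists_forall_mem_convexHull_image_compl_singleton f
    (by rw [Fintype.card_option]; omega)
  have hx_image {k : Option ι} {T : Set F} (hT : Convex ℝ T) (hfT : ∀ o, o ≠ k → f o ∈ T) :
      x ∈ T :=
    convexHull_min (image_subset_iff.2 hfT) hT (hx k)
  have hxK : x ∈ ⋂ i ∈ {i | i ≠ j}, C i := mem_iInter₂.2 fun h hhj =>
    hx_image (k := some h) (hconv h) fun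
      | none, _ => mem_iInter₂.1 hP h hhj
      | some i, hi => mem_iInter₂.1 (ha i) h fun hih => hi (congrArg some hih.symm)
  have hxP : x = P := by
    have := hx_image (k := some j) (convex_insert_setOf_real_inner_sub_pos P u) fun
      | none, _ => mem_insert P _
      | some i, hi =>
        Or.inr (hCu _ (mem_iInter₂.1 (ha i) j fun hji => hi (congrArg some hji.symm)))
    exact this.resolve_right (hKu x hxK).not_gt
  have hfa : f '' {none}ᶜ ⊆ range a := image_subset_iff.2 fun
    | none, h => absurd rfl h
    | some i, _ => mem_range_self i
  exact hxP ▸ convexHull_mono hfa (hx none)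

end InnerProductSpace

/-- There are d+1 points (the unique nearest points) belonging to every convex
cage carried by a d-critical family. -/
theorem points_in_every_convex_cage (d : ℕ)
    (C : Fin (d + 1) → Set (EuclideanSpace ℝ (Fin d)))
    (hcomp : ∀ i, IsCompact (C i)) (hconv : ∀ i, Convex ℝ (C i))
    (hcrit : ∀ j, (⋂ i ∈ {i : Fin (d + 1) | i ≠ j}, C i).Nonempty)
    (hempty : (⋂ i, C i) = ∅) :
    ∃ p : Fin (d + 1) → EuclideanSpace ℝ (Fin d),
      (∀ j, p j ∈ (⋂ i ∈ {i : Fin (d + 1) | i ≠ j}, C i) ∧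
        ∀ q ∈ (⋂ i ∈ {i : Fin (d + 1) | i ≠ j}, C i),
          Metric.infDist (p j) (C j) ≤ Metric.infDist q (C j)) ∧
      ∀ M : Set (EuclideanSpace ℝ (Fin d)), IsClosed M → Convex ℝ M →
        (∀ i, ∃ a ∈ M, a ∈ ⋂ h ∈ {h : Fin (d + 1) | h ≠ i}, C h) →
        ∀ j, p j ∈ M := by
  cases d with
  | zero =>
    refine ⟨fun _ => 0, fun j => ⟨?_, fun q _ => (congrArg (infDist · (C j))
      (Subsingleton.elim _ q)).le⟩, fun M _ _ hbase j => ?_⟩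
    · obtain ⟨x, hx⟩ := hcrit j
      exact Subsingleton.elim x 0 ▸ hx
    · obtain ⟨a, ha, -⟩ := hbase j
      exact Subsingleton.elim a 0 ▸ ha
  | succ d =>
    have hK (j : Fin (d + 2)) : IsCompact (⋂ i ∈ {i | i ≠ j}, C i) := by
      obtain ⟨i, hi⟩ := exists_ne j
      exact (hcomp i).of_isClosed_subset (isClosed_biInter fun i _ => (hcomp i).isClosed)
        (biInter_subset_of_mem hi)
    have hCne (j : Fin (d + 2)) : (C j).Nonempty := by
      obtain ⟨i, hi⟩ := exists_ne j
      obtain ⟨x, hx⟩ := hcrit i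
      exact ⟨x, mem_iInter₂.1 hx j hi.symm⟩
    choose p hpK hpmin using fun j =>
      (hK j).exists_isMinOn (hcrit j) (continuous_infDist_pt (C j)).continuousOn
    refine ⟨p, fun j => ⟨hpK j, fun q hq => hpmin j hq⟩, fun M _ hM hbase j => ?_⟩
    choose a haM haK using hbase
    exact convexHull_min (range_subset_iff.2 haM) hM <|
      mem_convexHull_range_of_forall_infDist_le (by simp) hconv hempty (hcomp j).isClosed
        (hCne j) (hpK j) (fun q hq => hpmin j hq) a haK
end

section
/- Let S be an n-simplex with vertices a_0, ..., a_n in R^d, and let C_0, ..., C_n be closed convex sets such that the facet of S opposite a_j is contained in C_j for each j, and S ⊆ C_0 ∪ ... ∪ C_n. Then ∩_{j=0}^n C_j ∩ S ≠ ∅. -/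
/-!
Let `S` be the simplex. The sets `Cⱼ ∩ S` are compact and convex, their union is the convex set
`S`, and any `n` of them meet (the vertex `aₖ` lies on every facet not opposite to it, hence in
every `Cⱼ` with `j ≠ k`). Berge's intersection theorem then gives a common point.

Berge's theorem is proved by induction on the number of sets. If the intersection `A` of all but
the last set misses the last set, a hyperplane `{f = c}` strictly separates them; by the
intermediate value theorem on convex sets, the slices of the other sets by this hyperplane again
satisfy the hypotheses, so they have a common point, which lies in `A` and at level `c`: absurd.
-/

open Set

variable {E : Type*} [TopologicalSpace E] [AddCommGroup E] [Module ℝ E]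
  [IsTopologicalAddGroup E] [ContinuousSMul ℝ E]

theorem Convex.exists_mem_apply_eq {s : Set E} (hs : Convex ℝ s) (f : StrongDual ℝ E)
    {x y : E} (hx : x ∈ s) (hy : y ∈ s) {c : ℝ} (hxc : f x ≤ c) (hcy : c ≤ f y) :
    ∃ z ∈ s, f z = c :=
  hs.isPreconnected.intermediate_value hx hy f.continuous.continuousOn ⟨hxc, hcy⟩

structure IsBergeFamily {m : ℕ} (C : Fin (m + 1) → Set E) : Prop where
  convex : ∀ i, Convex ℝ (C i)
  isCompact : ∀ i, IsCompact (C i)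
  convex_iUnion : Convex ℝ (⋃ i, C i)
  nonempty_iUnion : (⋃ i, C i).Nonempty
  nonempty_iInter_ne : ∀ k, (⋂ i ≠ k, C i).Nonempty

namespace IsBergeFamily

variable {m : ℕ} {C : Fin (m + 2) → Set E}

theorem slice (hC : IsBergeFamily C) {f : StrongDual ℝ E} {c : ℝ}
    (hA : ∀ x ∈ ⋂ i : Fin (m + 1), C i.castSucc, f x < c)
    (hlast : ∀ x ∈ C (Fin.last _), c < f x) :
    IsBergeFamily fun i : Fin (m + 1) => C i.castSucc ∩ {x | f x = c} := by
  obtain ⟨p, hp⟩ := hC.nonempty_iInter_ne (Fin.last _)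
  have hpA : p ∈ ⋂ i : Fin (m + 1), C i.castSucc :=
    mem_iInter.2 fun i => mem_iInter₂.1 hp _ (Fin.castSucc_ne_last i)
  have hunion :
      (⋃ i : Fin (m + 1), C i.castSucc ∩ {x | f x = c}) = (⋃ i, C i) ∩ {x | f x = c} := by
    ext x
    simp only [mem_iUnion, mem_inter_iff, Fin.exists_fin_succ' (P := (x ∈ C ·))]
    constructor
    · rintro ⟨i, hx, hfx⟩
      exact ⟨.inl ⟨i, hx⟩, hfx⟩
    · rintro ⟨⟨i, hx⟩ | hx, hfx⟩
      · exact ⟨i, hx, hfx⟩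
      · exact absurd hfx (hlast x hx).ne'
  refine ⟨fun i => (hC.convex _).inter (convex_hyperplane f.isLinear c),
    fun i => (hC.isCompact _).inter_right (isClosed_eq f.continuous continuous_const), ?_, ?_, ?_⟩
  · rw [hunion]
    exact hC.convex_iUnion.inter (convex_hyperplane f.isLinear c)
  · obtain ⟨q, hq⟩ := hC.nonempty_iInter_ne 0
    have hqlast : q ∈ C (Fin.last _) := mem_iInter₂.1 hq _ Fin.last_pos.ne'
    obtain ⟨z, hz, hfz⟩ := hC.convex_iUnion.exists_mem_apply_eq f
      (mem_iUnion_of_mem 0 (mem_iInter.1 hpA 0)) (mem_iUnion_of_mem _ hqlast)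
      (hA p hpA).le (hlast q hqlast).le
    rw [hunion]
    exact ⟨z, hz, hfz⟩
  · intro k
    obtain ⟨x, hx⟩ := hC.nonempty_iInter_ne k.castSucc
    have hxlast : x ∈ C (Fin.last _) := mem_iInter₂.1 hx _ (Fin.castSucc_ne_last k).symm
    have hconvex : Convex ℝ (⋂ i ≠ k, C i.castSucc) :=
      convex_iInter₂ fun i _ => hC.convex i.castSucc
    obtain ⟨z, hz, hfz⟩ := hconvex.exists_mem_apply_eq f
      (mem_iInter₂.2 fun i _ => mem_iInter.1 hpA i)
      (mem_iInter₂.2 fun i hik => mem_iInter₂.1 hx _ (Fin.castSucc_injective _ |>.ne hik))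
      (hA p hpA).le (hlast x hxlast).le
    exact ⟨z, mem_iInter₂.2 fun i hik => ⟨mem_iInter₂.1 hz i hik, hfz⟩⟩

theorem iInter_nonempty [LocallyConvexSpace ℝ E] [T2Space E] :
    ∀ {m : ℕ} {C : Fin (m + 1) → Set E}, IsBergeFamily C → (⋂ i, C i).Nonempty
  | 0, C, hC => by
    obtain ⟨x, hx⟩ := hC.nonempty_iUnion
    obtain ⟨i, hi⟩ := mem_iUnion.1 hx
    exact ⟨x, mem_iInter.2 fun j => Subsingleton.elim (α := Fin 1) i j ▸ hi⟩
  | m + 1, C, hC => by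
    have hsplit : (⋂ i, C i) = (⋂ i : Fin (m + 1), C i.castSucc) ∩ C (Fin.last _) := by
      ext x
      simp only [mem_iInter, mem_inter_iff, Fin.forall_fin_succ' (P := (x ∈ C ·))]
    rw [hsplit]
    by_contra hdisj
    rw [not_nonempty_iff_eq_empty, ← disjoint_iff_inter_eq_empty] at hdisj
    have hAcompact : IsCompact (⋂ i : Fin (m + 1), C i.castSucc) :=
      (hC.isCompact 0).of_isClosed_subset
        (isClosed_iInter fun i => (hC.isCompact i.castSucc).isClosed) (iInter_subset _ 0)
    obtain ⟨f, u, v, hA, huv, hlast⟩ := geometric_hahn_banach_compact_closed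
      (convex_iInter fun i => hC.convex _) hAcompact (hC.convex _) (hC.isCompact _).isClosed hdisj
    obtain ⟨w, hw⟩ := iInter_nonempty (hC.slice hA fun x hx => huv.trans (hlast x hx))
    rw [← iInter_inter] at hw
    exact (hA w hw.1).ne hw.2

end IsBergeFamily

theorem simplex_cover_common_point_general (d n : ℕ)
    (a : Fin (n + 1) → EuclideanSpace ℝ (Fin d))
    (C : Fin (n + 1) → Set (EuclideanSpace ℝ (Fin d)))
    (hcl : ∀ j, IsClosed (C j)) (hcv : ∀ j, Convex ℝ (C j))
    (hfacet : ∀ j, convexHull ℝ (a '' {i | i ≠ j}) ⊆ C j)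
    (hcover : convexHull ℝ (Set.range a) ⊆ ⋃ j, C j) :
    ((⋂ j, C j) ∩ convexHull ℝ (Set.range a)).Nonempty := by
  set S := convexHull ℝ (Set.range a)
  have hvertex : ∀ k, a k ∈ S := fun k => subset_convexHull ℝ _ ⟨k, rfl⟩
  have hunion : (⋃ j, C j ∩ S) = S := by
    rw [← iUnion_inter, inter_eq_right.2 hcover]
  have hBerge : IsBergeFamily fun j => C j ∩ S :=
    { convex := fun j => (hcv j).inter (convex_convexHull ℝ _)
      isCompact := fun j => ((finite_range a).isCompact_convexHull ℝ).inter_left (hcl j)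
      convex_iUnion := by rw [hunion]; exact convex_convexHull ℝ _
      nonempty_iUnion := by rw [hunion]; exact ⟨a 0, hvertex 0⟩
      nonempty_iInter_ne := fun k => ⟨a k, mem_iInter₂.2 fun j hjk =>
        ⟨hfacet j (subset_convexHull ℝ _ ⟨k, hjk.symm, rfl⟩), hvertex k⟩⟩ }
  obtain ⟨x, hx⟩ := hBerge.iInter_nonempty
  rw [← iInter_inter] at hx
  exact ⟨x, hx⟩

/-- KKM-type covering of a simplex: if each facet opposite a_j lies in the
closed convex set C_j and the simplex is covered by the C_j, then all C_j have
a common point inside the simplex. -/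
theorem simplex_cover_common_point (d n : ℕ)
    (a : Fin (n + 1) → EuclideanSpace ℝ (Fin d))
    (haff : AffineIndependent ℝ a)
    (C : Fin (n + 1) → Set (EuclideanSpace ℝ (Fin d)))
    (hcl : ∀ j, IsClosed (C j)) (hcv : ∀ j, Convex ℝ (C j))
    (hfacet : ∀ j, convexHull ℝ (a '' {i | i ≠ j}) ⊆ C j)
    (hcover : convexHull ℝ (Set.range a) ⊆ ⋃ j, C j) :
    ((⋂ j, C j) ∩ convexHull ℝ (Set.range a)).Nonempty :=
  simplex_cover_common_point_general d n a C hcl hcv hfacet hcover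
end
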